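/- arXiv:2503.05329 — 4 statements merged into one kernel-verified Lean document; each statement's English description precedes it below -/
import Mathlib

section
/- With the recursive definitions d(n) and r_n as above (d(1) least k with k/(k+2) > r; d(n) least k with k/(k+1+2^(dn−d)) > r/r_{n−1}; r_n = ∏_{j=1}^n d(j)/(d(j)+1+2^(dj−d))), the sequence (r_n) satisfies 1 > r_n ≥ r_{n+1} > r for all n ∈ ℕ. -/
/-!
Each `r_n` is `r_{n-1}` times the factor `d(n)/(d(n)+1+2^(dn-d)) < 1`, so the sequence strictly
decreases from `r_0 = 1`. The choice of `d(n)` makes this factor exceed `r / r_{n-1}`, which is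
exactly `r < r_n` once `r_{n-1} > r > 0` is known inductively.
-/

open Finset

lemma div_add_one_add_lt_one {k c : ℝ} (hk : 0 ≤ k) (hc : 0 ≤ c) : k / (k + 1 + c) < 1 :=
  (div_lt_one (by positivity)).2 (by linarith)

lemma succ_eq_mul_of_eq_prod_Icc {M : Type*} [CommMonoid M] {R f : ℕ → M} (h0 : R 0 = 1)
    (hprod : ∀ n, 1 ≤ n → R n = ∏ j ∈ Icc 1 n, f j) (n : ℕ) : R (n + 1) = R n * f (n + 1) := by
  rw [hprod (n + 1) n.succ_pos, prod_Icc_succ_top n.succ_pos]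
  rcases Nat.eq_zero_or_pos n with rfl | hn
  · simp [h0]
  · rw [hprod n hn]

section MulStep

variable {R q : ℕ → ℝ} {r : ℝ}

lemma lt_of_div_lt_mul_step (hr : 0 < r) (h0 : r < R 0) (hstep : ∀ n, R (n + 1) = R n * q n)
    (hq : ∀ n, r / R n < q n) (n : ℕ) : r < R n := by
  induction n with
  | zero => exact h0
  | succ n ih =>
    have hRpos : 0 < R n := hr.trans ih
    rw [hstep, mul_comm]
    exact (div_lt_iff₀ hRpos).1 (hq n)

lemma strictAnti_of_mul_step (hpos : ∀ n, 0 < R n) (hstep : ∀ n, R (n + 1) = R n * q n)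
    (hq : ∀ n, q n < 1) : StrictAnti R :=
  strictAnti_nat_of_succ_lt fun n => by
    rw [hstep]
    exact mul_lt_of_lt_one_right (hpos n) (hq n)

end MulStep

theorem r_seq_decreasing_general (r : ℝ) (hr0 : 0 < r) (hr1 : r < 1) (d : ℕ)
    (D : ℕ → ℕ) (R : ℕ → ℝ) (hR0 : R 0 = 1)
    (hRprod : ∀ n, 1 ≤ n →
      R n = ∏ j ∈ Finset.Icc 1 n, (D j : ℝ) / ((D j : ℝ) + 1 + 2 ^ (d * j - d)))
    (hleast : ∀ n, 1 ≤ n →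
      IsLeast {k : ℕ | r / R (n - 1) < (k : ℝ) / ((k : ℝ) + 1 + 2 ^ (d * n - d))} (D n)) :
    ∀ n, 1 ≤ n → R n < 1 ∧ R (n + 1) ≤ R n ∧ r < R (n + 1) ∧ r < R n := by
  set q : ℕ → ℝ := fun n => (D (n + 1) : ℝ) / ((D (n + 1) : ℝ) + 1 + 2 ^ (d * (n + 1) - d))
  have hstep (n : ℕ) : R (n + 1) = R n * q n := succ_eq_mul_of_eq_prod_Icc hR0 hRprod n
  have hq_gt (n : ℕ) : r / R n < q n := by
    simpa using (hleast (n + 1) n.succ_pos).1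
  have hq_lt_one (n : ℕ) : q n < 1 := div_add_one_add_lt_one (by positivity) (by positivity)
  have hr_lt : ∀ n, r < R n := lt_of_div_lt_mul_step hr0 (hR0 ▸ hr1) hstep hq_gt
  have hanti : StrictAnti R := strictAnti_of_mul_step (fun n => hr0.trans (hr_lt n)) hstep hq_lt_one
  intro n hn
  exact ⟨hR0 ▸ hanti (by omega : 0 < n), hanti.antitone n.le_succ, hr_lt (n + 1), hr_lt n⟩

/-- with the recursive definitions `d(n)` (least `k` with
`k/(k+1+2^(dn−d)) > r/r_{n−1}`, `r_0 = 1`) and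
`r_n = ∏_{j=1}^n d(j)/(d(j)+1+2^(dj−d))`, we have `1 > r_n ≥ r_{n+1} > r` for all `n ≥ 1`. -/
theorem r_seq_decreasing (r : ℝ) (hr0 : 0 < r) (hr1 : r < 1) (d : ℕ) (hd : 1 ≤ d)
    (D : ℕ → ℕ) (R : ℕ → ℝ) (hR0 : R 0 = 1)
    (hRprod : ∀ n, 1 ≤ n →
      R n = ∏ j ∈ Finset.Icc 1 n, (D j : ℝ) / ((D j : ℝ) + 1 + 2 ^ (d * j - d)))
    (hleast : ∀ n, 1 ≤ n →
      IsLeast {k : ℕ | r / R (n - 1) < (k : ℝ) / ((k : ℝ) + 1 + 2 ^ (d * n - d))} (D n)) :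
    ∀ n, 1 ≤ n → R n < 1 ∧ R (n + 1) ≤ R n ∧ r < R (n + 1) ∧ r < R n :=
  r_seq_decreasing_general r hr0 hr1 d D R hR0 hRprod hleast
end

section
/- With the recursive definitions d(n) and r_n as above (for 0 < r < 1, d ≥ 1), the decreasing sequence r_n converges to r; equivalently, ∏_{n=1}^∞ d(n)/(d(n) + 1 + 2^(dn−d)) = r. -/
open Filter Topology

/-!
Minimality of `d(m+1)` says the factor obtained from `d(m+1) - 1` would already have pushed
`r_m` to `r` or below, and the two consecutive factors `k/(k+c)` and `(k-1)/(k-1+c)` differ by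
exactly `(1 - k/(k+c))/(k-1+c)`. Hence `r_{m+1} - r ≤ r_m - r_{m+1}`, i.e. the distance to `r`
at least halves at every step.
-/

theorem tendsto_zero_of_le_mul_self {u : ℕ → ℝ} {c : ℝ} (hc0 : 0 ≤ c) (hc1 : c < 1)
    (hu : ∀ n, 0 ≤ u n) (h : ∀ n, u (n + 1) ≤ c * u n) : Tendsto u atTop (𝓝 0) := by
  refine squeeze_zero hu (fun n => le_geom hc0 n fun k _ => h k) ?_
  simpa using (tendsto_pow_atTop_nhds_zero_of_lt_one hc0 hc1).mul_const (u 0)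

theorem succ_eq_mul_of_eq_prod_Icc_s4 {R f : ℕ → ℝ} (hR0 : R 0 = 1)
    (hR : ∀ n, 1 ≤ n → R n = ∏ j ∈ Finset.Icc 1 n, f j) (m : ℕ) :
    R (m + 1) = R m * f (m + 1) := by
  rcases m.eq_zero_or_pos with rfl | hm
  · simp [hR0, hR 1 le_rfl]
  · rw [hR (m + 1) (by omega), hR m hm, Finset.prod_Icc_succ_top (by omega)]

theorem mul_div_sub_le_half_of_minimal {x r k E : ℝ} (hx : 0 < x) (hk : 1 ≤ k) (hE : 0 ≤ E)
    (hmin : (k - 1) / (k - 1 + 1 + E) ≤ r / x) :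
    x * (k / (k + 1 + E)) - r ≤ (x - r) / 2 := by
  have hkE : 0 < k + E := by linarith
  have hkE1 : 0 < k + 1 + E := by linarith
  set y := x * (k / (k + 1 + E))
  have hy : y ≤ x := mul_le_of_le_one_right hx.le ((div_le_one hkE1).2 (by linarith))
  have hprev : x * ((k - 1) / (k + E)) ≤ r := by
    rw [sub_add_cancel] at hmin
    exact (le_div_iff₀' hx).1 hmin
  have hgap : y - x * ((k - 1) / (k + E)) = (x - y) / (k + E) := by
    simp only [y]; field_simp; ring
  have hshrink : (x - y) / (k + E) ≤ x - y :=
    div_le_self (by linarith) (by linarith)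
  linarith

theorem r_seq_tendsto_general (r : ℝ) (hr0 : 0 < r) (hr1 : r < 1) (d : ℕ)
    (D : ℕ → ℕ) (R : ℕ → ℝ) (hR0 : R 0 = 1)
    (hRprod : ∀ n, 1 ≤ n →
      R n = ∏ j ∈ Finset.Icc 1 n, (D j : ℝ) / ((D j : ℝ) + 1 + 2 ^ (d * j - d)))
    (hleast : ∀ n, 1 ≤ n →
      IsLeast {k : ℕ | r / R (n - 1) < (k : ℝ) / ((k : ℝ) + 1 + 2 ^ (d * n - d))} (D n)) :
    Tendsto R atTop (nhds r) ∧
      Tendsto (fun N => ∏ j ∈ Finset.Icc 1 N, (D j : ℝ) / ((D j : ℝ) + 1 + 2 ^ (d * j - d)))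
        atTop (nhds r) := by
  have hrec : ∀ m, R (m + 1) = R m * ((D (m + 1) : ℝ) /
      ((D (m + 1) : ℝ) + 1 + 2 ^ (d * (m + 1) - d))) :=
    succ_eq_mul_of_eq_prod_Icc_s4 hR0 hRprod
  have hmem : ∀ m, r / R m < (D (m + 1) : ℝ) / ((D (m + 1) : ℝ) + 1 + 2 ^ (d * (m + 1) - d)) :=
    fun m => (hleast (m + 1) m.succ_pos).1
  have hgt : ∀ n, r < R n := by
    intro n
    induction n with
    | zero => rwa [hR0]
    | succ m ih =>
      rw [hrec, ← div_lt_iff₀' (hr0.trans ih)]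
      exact hmem m
  have hhalf : ∀ m, R (m + 1) - r ≤ 1 / 2 * (R m - r) := by
    intro m
    have hRm : 0 < R m := hr0.trans (hgt m)
    have hD : 1 ≤ D (m + 1) := by
      by_contra! h0
      have := hmem m
      simp only [Nat.lt_one_iff.1 h0, Nat.cast_zero, zero_div] at this
      exact this.not_ge (div_pos hr0 hRm).le
    have hmin : ¬ D (m + 1) - 1 ∈ {k : ℕ | r / R m < (k : ℝ) /
        ((k : ℝ) + 1 + 2 ^ (d * (m + 1) - d))} :=
      fun h => by have := (hleast (m + 1) m.succ_pos).2 h; omega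
    simp only [Set.mem_ofPred_eq, not_lt, Nat.cast_sub hD, Nat.cast_one] at hmin
    rw [hrec, one_div_mul_eq_div]
    exact mul_div_sub_le_half_of_minimal hRm (by exact_mod_cast hD) (by positivity) hmin
  have hR : Tendsto R atTop (𝓝 r) := by
    rw [← tendsto_sub_nhds_zero_iff]
    exact tendsto_zero_of_le_mul_self (by norm_num) (by norm_num)
      (fun n => (sub_pos.2 (hgt n)).le) hhalf
  exact ⟨hR, hR.congr' (eventually_ge_atTop 1 |>.mono hRprod)⟩

/-- with the recursive definitions `d(n)` and `r_n` as in Lemma 2.4 of the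
paper, the decreasing sequence `r_n` converges to `r`; that is,
`∏_{n=1}^∞ d(n)/(d(n)+1+2^(dn−d)) = r`. -/
theorem r_seq_tendsto (r : ℝ) (hr0 : 0 < r) (hr1 : r < 1) (d : ℕ) (hd : 1 ≤ d)
    (D : ℕ → ℕ) (R : ℕ → ℝ) (hR0 : R 0 = 1)
    (hRprod : ∀ n, 1 ≤ n →
      R n = ∏ j ∈ Finset.Icc 1 n, (D j : ℝ) / ((D j : ℝ) + 1 + 2 ^ (d * j - d)))
    (hleast : ∀ n, 1 ≤ n →
      IsLeast {k : ℕ | r / R (n - 1) < (k : ℝ) / ((k : ℝ) + 1 + 2 ^ (d * n - d))} (D n)) :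
    Tendsto R atTop (nhds r) ∧
      Tendsto (fun N => ∏ j ∈ Finset.Icc 1 N, (D j : ℝ) / ((D j : ℝ) + 1 + 2 ^ (d * j - d)))
        atTop (nhds r) :=
  r_seq_tendsto_general r hr0 hr1 d D R hR0 hRprod hleast
end

section
/- Let 0 < r' ≤ r < 1 and d ∈ ℕ with d ≥ 1. Then there exist sequences (d(n)) and (d'(n)) of positive natural numbers such that: (a) d(n) is nondecreasing with lim d(n) = ∞; (b) ∏_{n=1}^∞ d(n)/(d(n)+1+2^(dn−d)) = r; (c) d'(n) ≤ d(n) for all n; and (d) ∏_{n=1}^∞ d'(n)/(d(n)+1+2^(dn−d)) = r'. -/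
/-!
Choose `D n` greedily as the least integer keeping the partial product above `r`. By
minimality each step overshoots `r` by at most `1 / (1 + 2 ^ (d * n - d))`, so the partial
products decrease to `r`; since the partial products decrease and the weights `2 ^ (d * n - d)`
increase, the greedy choices are nondecreasing, and they grow at least like `r * 2 ^ (d * n - d)`.
Then `D' n ≤ D n` is chosen greedily as the least integer keeping the new partial product above
`r' / r` times the old one; a ceiling overshoots by at most one unit, i.e. by at most
`1 / (D n + 1 + 2 ^ (d * n - d))` in the partial product, which tends to `0`.
-/

open Filter Topology

noncomputable def partialProd (D : ℕ → ℕ) (w : ℕ → ℝ) (N : ℕ) : ℝ :=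
  ∏ n ∈ Finset.Icc 1 N, (D n : ℝ) / w n

lemma partialProd_succ (D : ℕ → ℕ) (w : ℕ → ℝ) (n : ℕ) :
    partialProd D w (n + 1) = partialProd D w n * (D (n + 1) / w (n + 1)) :=
  Finset.prod_Icc_succ_top (by omega) _

lemma partialProd_pos {D : ℕ → ℕ} {w : ℕ → ℝ} (hD : ∀ n, 0 < D n)
    (hDw : ∀ n, (D n : ℝ) ≤ w n) (N : ℕ) : 0 < partialProd D w N :=
  Finset.prod_pos fun n _ =>
    div_pos (Nat.cast_pos.2 (hD n)) ((Nat.cast_pos.2 (hD n)).trans_le (hDw n))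

/-- For `0 ≤ r < P` and `0 ≤ c`, the least `m : ℕ` with `r < P * (m / (m + 1 + c))`. -/
noncomputable def greedyFactor (r P c : ℝ) : ℕ := ⌊r * (1 + c) / (P - r)⌋₊ + 1

section greedyFactor
variable {r P c : ℝ}

lemma lt_greedyFactor : r * (1 + c) / (P - r) < greedyFactor r P c := by
  unfold greedyFactor; push_cast; exact Nat.lt_floor_add_one _

lemma lt_mul_greedyFactor_div (hrP : r < P) (hc : 0 ≤ c) :
    r < P * (greedyFactor r P c / (greedyFactor r P c + 1 + c)) := by
  have hm : r * (1 + c) < (P - r) * greedyFactor r P c :=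
    (div_lt_iff₀' (sub_pos.2 hrP)).1 lt_greedyFactor
  rw [mul_div_assoc', lt_div_iff₀ (by positivity)]
  linarith

lemma mul_greedyFactor_div_sub_le (hr : 0 ≤ r) (hrP : r < P) (hc : 0 ≤ c) :
    P * (greedyFactor r P c / (greedyFactor r P c + 1 + c)) - r
      ≤ (P - r) / (greedyFactor r P c + 1 + c) := by
  have hPr : 0 < P - r := sub_pos.2 hrP
  have hm : ((greedyFactor r P c : ℕ) : ℝ) - 1 ≤ r * (1 + c) / (P - r) := by
    unfold greedyFactor
    push_cast
    linarith [Nat.floor_le (by positivity : 0 ≤ r * (1 + c) / (P - r))]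
  rw [le_div_iff₀ hPr] at hm
  rw [mul_div_assoc', div_sub' (by positivity)]
  refine div_le_div_of_nonneg_right ?_ (by positivity)
  linear_combination hm

lemma greedyFactor_le_greedyFactor {P' c' : ℝ} (hr : 0 ≤ r) (hrP' : r < P') (hP : P' ≤ P)
    (hc : 0 ≤ c) (hcc : c ≤ c') : greedyFactor r P c ≤ greedyFactor r P' c' := by
  have : 0 < P' - r := sub_pos.2 hrP'
  have : 0 ≤ c' := hc.trans hcc
  unfold greedyFactor
  gcongr

end greedyFactor

noncomputable def greedyProd (r : ℝ) (c : ℕ → ℝ) : ℕ → ℝ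
  | 0 => 1
  | n + 1 =>
    let m := greedyFactor r (greedyProd r c n) (c (n + 1))
    greedyProd r c n * (m / (m + 1 + c (n + 1)))

noncomputable def greedySeq (r : ℝ) (c : ℕ → ℝ) : ℕ → ℕ
  | 0 => 1
  | n + 1 => greedyFactor r (greedyProd r c n) (c (n + 1))

section greedySeq
variable {r : ℝ} {c : ℕ → ℝ}

lemma greedyProd_succ (n : ℕ) :
    greedyProd r c (n + 1) =
      greedyProd r c n * (greedySeq r c (n + 1) / (greedySeq r c (n + 1) + 1 + c (n + 1))) :=
  rfl

lemma greedyProd_eq_partialProd (N : ℕ) :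
    greedyProd r c N = partialProd (greedySeq r c) (fun n => greedySeq r c n + 1 + c n) N := by
  induction N with
  | zero => simp [greedyProd, partialProd]
  | succ N ih => rw [partialProd_succ, ← ih, greedyProd_succ]

lemma greedySeq_pos : ∀ n, 0 < greedySeq r c n
  | 0 => one_pos
  | _ + 1 => Nat.succ_pos _

lemma lt_greedyProd (hr1 : r < 1) (hc : ∀ n, 0 ≤ c n) : ∀ n, r < greedyProd r c n
  | 0 => hr1
  | n + 1 => lt_mul_greedyFactor_div (lt_greedyProd hr1 hc n) (hc (n + 1))

lemma greedyProd_antitone (hr : 0 ≤ r) (hr1 : r < 1) (hc : ∀ n, 0 ≤ c n) :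
    Antitone (greedyProd r c) := by
  refine antitone_nat_of_succ_le fun n => ?_
  have := hc (n + 1)
  rw [greedyProd_succ]
  refine mul_le_of_le_one_right (hr.trans (lt_greedyProd hr1 hc n).le) ?_
  rw [div_le_one (by positivity)]
  linarith

lemma greedyProd_le_one (hr : 0 ≤ r) (hr1 : r < 1) (hc : ∀ n, 0 ≤ c n) (n : ℕ) :
    greedyProd r c n ≤ 1 :=
  greedyProd_antitone hr hr1 hc n.zero_le

lemma greedySeq_monotone (hr : 0 ≤ r) (hr1 : r < 1) (hc : ∀ n, 0 ≤ c n) (hcm : Monotone c) :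
    Monotone (greedySeq r c) := by
  refine monotone_nat_of_le_succ fun n => ?_
  cases n with
  | zero => exact greedySeq_pos 1
  | succ n =>
    exact greedyFactor_le_greedyFactor hr (lt_greedyProd hr1 hc (n + 1))
      (greedyProd_antitone hr hr1 hc n.le_succ) (hc _) (hcm (n + 1).le_succ)

lemma mul_le_greedySeq_succ (hr : 0 ≤ r) (hr1 : r < 1) (hc : ∀ n, 0 ≤ c n) (n : ℕ) :
    r * c (n + 1) ≤ greedySeq r c (n + 1) := by
  have hP := lt_greedyProd hr1 hc n
  have hP1 := greedyProd_le_one hr hr1 hc n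
  refine le_trans ?_ lt_greedyFactor.le
  rw [le_div_iff₀ (by linarith)]
  nlinarith [mul_nonneg hr (hc (n + 1))]

lemma tendsto_greedySeq (hr : 0 < r) (hr1 : r < 1) (hc : ∀ n, 0 ≤ c n)
    (hct : Tendsto c atTop atTop) : Tendsto (fun n => (greedySeq r c n : ℝ)) atTop atTop := by
  rw [← tendsto_add_atTop_iff_nat 1]
  exact tendsto_atTop_mono (mul_le_greedySeq_succ hr.le hr1 hc)
    ((hct.comp (tendsto_add_atTop_nat 1)).const_mul_atTop hr)

lemma greedyProd_succ_le (hr : 0 ≤ r) (hr1 : r < 1) (hc : ∀ n, 0 ≤ c n) (n : ℕ) :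
    greedyProd r c (n + 1) ≤ r + (1 + c (n + 1))⁻¹ := by
  have hP := lt_greedyProd hr1 hc n
  have hP1 := greedyProd_le_one hr hr1 hc n
  have := hc (n + 1)
  calc greedyProd r c (n + 1)
      ≤ r + (greedyProd r c n - r) / (greedySeq r c (n + 1) + 1 + c (n + 1)) :=
        sub_le_iff_le_add'.1 (mul_greedyFactor_div_sub_le hr hP (hc (n + 1)))
    _ ≤ r + 1 / (1 + c (n + 1)) := by
        gcongr
        · linarith
        · linarith [(greedySeq r c (n + 1)).cast_nonneg (α := ℝ)]
    _ = r + (1 + c (n + 1))⁻¹ := by rw [one_div]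

lemma tendsto_greedyProd (hr : 0 ≤ r) (hr1 : r < 1) (hc : ∀ n, 0 ≤ c n)
    (hct : Tendsto c atTop atTop) : Tendsto (greedyProd r c) atTop (𝓝 r) := by
  rw [← tendsto_add_atTop_iff_nat 1]
  have hbound : Tendsto (fun n => r + (1 + c (n + 1))⁻¹) atTop (𝓝 r) := by
    simpa using tendsto_const_nhds.add <| tendsto_inv_atTop_zero.comp <|
      (tendsto_atTop_add_const_left _ 1 hct).comp (tendsto_add_atTop_nat 1)
  exact tendsto_of_tendsto_of_tendsto_of_le_of_le tendsto_const_nhds hbound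
    (fun n => (lt_greedyProd hr1 hc _).le) (greedyProd_succ_le hr hr1 hc)

end greedySeq

theorem exists_monotone_tendsto_partialProd {r : ℝ} {c : ℕ → ℝ} (hr : 0 < r) (hr1 : r < 1)
    (hc : ∀ n, 0 ≤ c n) (hcm : Monotone c) (hct : Tendsto c atTop atTop) :
    ∃ D : ℕ → ℕ, (∀ n, 0 < D n) ∧ Monotone D ∧
      Tendsto (fun n => (D n : ℝ)) atTop atTop ∧
      Tendsto (partialProd D fun n => D n + 1 + c n) atTop (𝓝 r) :=
  ⟨greedySeq r c, greedySeq_pos, greedySeq_monotone hr.le hr1 hc hcm,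
    tendsto_greedySeq hr hr1 hc hct,
    (tendsto_greedyProd hr.le hr1 hc hct).congr greedyProd_eq_partialProd⟩

noncomputable def greedySubProd (s : ℝ) (D : ℕ → ℕ) (w : ℕ → ℝ) : ℕ → ℝ
  | 0 => 1
  | n + 1 =>
    let m := ⌈s * partialProd D w n / greedySubProd s D w n * D (n + 1)⌉₊
    greedySubProd s D w n * (m / w (n + 1))

/-- `greedySubSeq s D w (n + 1)` is the least `m : ℕ` keeping `s * partialProd D w (n + 1)`
below `greedySubProd s D w (n + 1)`. -/
noncomputable def greedySubSeq (s : ℝ) (D : ℕ → ℕ) (w : ℕ → ℝ) : ℕ → ℕ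
  | 0 => 1
  | n + 1 => ⌈s * partialProd D w n / greedySubProd s D w n * D (n + 1)⌉₊

section greedySubSeq
variable {s : ℝ} {D : ℕ → ℕ} {w : ℕ → ℝ}

lemma greedySubProd_succ (n : ℕ) :
    greedySubProd s D w (n + 1) =
      greedySubProd s D w n * (greedySubSeq s D w (n + 1) / w (n + 1)) :=
  rfl

lemma greedySubProd_eq_partialProd (N : ℕ) :
    greedySubProd s D w N = partialProd (greedySubSeq s D w) w N := by
  induction N with
  | zero => simp [greedySubProd, partialProd]
  | succ N ih => rw [partialProd_succ, ← ih, greedySubProd_succ]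

lemma greedySubSeq_succ_le {n : ℕ} (hQ : 0 ≤ greedySubProd s D w n)
    (hPQ : s * partialProd D w n ≤ greedySubProd s D w n) :
    greedySubSeq s D w (n + 1) ≤ D (n + 1) :=
  Nat.ceil_le.2 <| mul_le_of_le_one_left (Nat.cast_nonneg _) (div_le_one_of_le₀ hPQ hQ)

lemma greedySubProd_bounds (hs : 0 < s) (hs1 : s ≤ 1) (hD : ∀ n, 0 < D n)
    (hDw : ∀ n, (D n : ℝ) ≤ w n) :
    ∀ n, s * partialProd D w n ≤ greedySubProd s D w n ∧ greedySubProd s D w n ≤ 1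
  | 0 => by simpa [greedySubProd, partialProd] using hs1
  | n + 1 => by
    obtain ⟨hPQ, hQ1⟩ := greedySubProd_bounds hs hs1 hD hDw n
    have hQ : 0 < greedySubProd s D w n := (mul_pos hs (partialProd_pos hD hDw n)).trans_le hPQ
    have hw : 0 < w (n + 1) := (Nat.cast_pos.2 (hD (n + 1))).trans_le (hDw (n + 1))
    have hmD : (greedySubSeq s D w (n + 1) : ℝ) ≤ w (n + 1) :=
      (Nat.cast_le.2 (greedySubSeq_succ_le hQ.le hPQ)).trans (hDw (n + 1))
    constructor
    · have hm : s * partialProd D w n / greedySubProd s D w n * D (n + 1)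
          ≤ greedySubSeq s D w (n + 1) := Nat.le_ceil _
      rw [div_mul_eq_mul_div, div_le_iff₀' hQ] at hm
      calc s * partialProd D w (n + 1)
          = s * partialProd D w n * D (n + 1) / w (n + 1) := by rw [partialProd_succ]; ring
        _ ≤ greedySubProd s D w n * greedySubSeq s D w (n + 1) / w (n + 1) := by gcongr
        _ = greedySubProd s D w (n + 1) := by rw [greedySubProd_succ]; ring
    · rw [greedySubProd_succ]
      exact mul_le_one₀ hQ1 (by positivity) ((div_le_one hw).2 hmD)

lemma greedySubProd_pos (hs : 0 < s) (hs1 : s ≤ 1) (hD : ∀ n, 0 < D n)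
    (hDw : ∀ n, (D n : ℝ) ≤ w n) (n : ℕ) : 0 < greedySubProd s D w n :=
  (mul_pos hs (partialProd_pos hD hDw n)).trans_le (greedySubProd_bounds hs hs1 hD hDw n).1

lemma greedySubSeq_pos (hs : 0 < s) (hs1 : s ≤ 1) (hD : ∀ n, 0 < D n)
    (hDw : ∀ n, (D n : ℝ) ≤ w n) :
    ∀ n, 0 < greedySubSeq s D w n
  | 0 => one_pos
  | n + 1 => by
    have := partialProd_pos hD hDw n
    have := greedySubProd_pos hs hs1 hD hDw n
    have := hD (n + 1)
    exact Nat.ceil_pos.2 (by positivity)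

lemma greedySubSeq_le (hs : 0 < s) (hs1 : s ≤ 1) (hD : ∀ n, 0 < D n)
    (hDw : ∀ n, (D n : ℝ) ≤ w n) :
    ∀ n, greedySubSeq s D w n ≤ D n
  | 0 => hD 0
  | n + 1 =>
    greedySubSeq_succ_le (greedySubProd_pos hs hs1 hD hDw n).le
      (greedySubProd_bounds hs hs1 hD hDw n).1

lemma greedySubProd_succ_le (hs : 0 < s) (hs1 : s ≤ 1) (hD : ∀ n, 0 < D n)
    (hDw : ∀ n, (D n : ℝ) ≤ w n) (n : ℕ) :
    greedySubProd s D w (n + 1) ≤ s * partialProd D w (n + 1) + (w (n + 1))⁻¹ := by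
  set P := partialProd D w n
  set Q := greedySubProd s D w n
  have hP : 0 < P := partialProd_pos hD hDw n
  have hQ : 0 < Q := greedySubProd_pos hs hs1 hD hDw n
  have hQ1 : Q ≤ 1 := (greedySubProd_bounds hs hs1 hD hDw n).2
  have hw : 0 < w (n + 1) := (Nat.cast_pos.2 (hD (n + 1))).trans_le (hDw (n + 1))
  have hm : (greedySubSeq s D w (n + 1) : ℝ) < s * P / Q * D (n + 1) + 1 :=
    Nat.ceil_lt_add_one (by positivity)
  calc greedySubProd s D w (n + 1)
      ≤ Q * ((s * P / Q * D (n + 1) + 1) / w (n + 1)) := by rw [greedySubProd_succ]; gcongr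
    _ = s * partialProd D w (n + 1) + Q / w (n + 1) := by rw [partialProd_succ]; field_simp; ring
    _ ≤ s * partialProd D w (n + 1) + (w (n + 1))⁻¹ := by rw [← one_div]; gcongr

lemma tendsto_greedySubProd (hs : 0 < s) (hs1 : s ≤ 1) (hD : ∀ n, 0 < D n)
    (hDw : ∀ n, (D n : ℝ) ≤ w n)
    (hw : Tendsto w atTop atTop) {L : ℝ}
    (hL : Tendsto (partialProd D w) atTop (𝓝 L)) :
    Tendsto (greedySubProd s D w) atTop (𝓝 (s * L)) := by
  rw [← tendsto_add_atTop_iff_nat 1]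
  have hlower := (hL.comp (tendsto_add_atTop_nat 1)).const_mul s
  have hupper : Tendsto (fun n => s * partialProd D w (n + 1) + (w (n + 1))⁻¹) atTop
      (𝓝 (s * L)) := by
    simpa using hlower.add (tendsto_inv_atTop_zero.comp (hw.comp (tendsto_add_atTop_nat 1)))
  exact tendsto_of_tendsto_of_tendsto_of_le_of_le hlower hupper
    (fun n => (greedySubProd_bounds hs hs1 hD hDw (n + 1)).1)
    (greedySubProd_succ_le hs hs1 hD hDw)

end greedySubSeq

theorem exists_le_tendsto_partialProd_mul {s L : ℝ} {D : ℕ → ℕ} {w : ℕ → ℝ}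
    (hs : 0 < s) (hs1 : s ≤ 1) (hD : ∀ n, 0 < D n) (hDw : ∀ n, (D n : ℝ) ≤ w n)
    (hw : Tendsto w atTop atTop) (hL : Tendsto (partialProd D w) atTop (𝓝 L)) :
    ∃ D' : ℕ → ℕ, (∀ n, 0 < D' n) ∧ (∀ n, D' n ≤ D n) ∧
      Tendsto (partialProd D' w) atTop (𝓝 (s * L)) :=
  ⟨greedySubSeq s D w, greedySubSeq_pos hs hs1 hD hDw, greedySubSeq_le hs hs1 hD hDw,
    (tendsto_greedySubProd hs hs1 hD hDw hw hL).congr greedySubProd_eq_partialProd⟩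

lemma tendsto_two_pow_mul_sub {d : ℕ} (hd : 1 ≤ d) :
    Tendsto (fun n : ℕ => (2 : ℝ) ^ (d * n - d)) atTop atTop := by
  refine (tendsto_pow_atTop_atTop_of_one_lt one_lt_two).comp
    (tendsto_atTop_mono (fun n => ?_) (tendsto_sub_atTop_nat 1))
  rw [← Nat.mul_sub_one]
  exact Nat.le_mul_of_pos_left _ hd

/-- Lemma 2.4 of the paper: for `0 < r' ≤ r < 1` and `d ≥ 1` there exist
sequences `(d(n))`, `(d'(n))` of positive natural numbers such that `d(n)` is nondecreasing
and tends to infinity, `∏_{n=1}^∞ d(n)/(d(n)+1+2^(dn−d)) = r`, `d'(n) ≤ d(n)` for all `n`,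
and `∏_{n=1}^∞ d'(n)/(d(n)+1+2^(dn−d)) = r'`. -/
theorem seq_lem (r' r : ℝ) (h0 : 0 < r') (h1 : r' ≤ r) (h2 : r < 1) (d : ℕ) (hd : 1 ≤ d) :
    ∃ D D' : ℕ → ℕ,
      (∀ n, 0 < D n) ∧ (∀ n, 0 < D' n) ∧
      Monotone D ∧ Tendsto (fun n => (D n : ℝ)) atTop atTop ∧
      Tendsto (fun N => ∏ n ∈ Finset.Icc 1 N, (D n : ℝ) / ((D n : ℝ) + 1 + 2 ^ (d * n - d)))
        atTop (nhds r) ∧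
      (∀ n, D' n ≤ D n) ∧
      Tendsto (fun N => ∏ n ∈ Finset.Icc 1 N, (D' n : ℝ) / ((D n : ℝ) + 1 + 2 ^ (d * n - d)))
        atTop (nhds r') := by
  have hr : 0 < r := h0.trans_le h1
  set c : ℕ → ℝ := fun n => 2 ^ (d * n - d)
  have hc (n : ℕ) : 0 ≤ c n := by positivity
  have hcm : Monotone c := fun m n hmn =>
    pow_le_pow_right₀ one_le_two (Nat.sub_le_sub_right (Nat.mul_le_mul_left d hmn) d)
  obtain ⟨D, hD, hDm, hDt, hP⟩ :=
    exists_monotone_tendsto_partialProd hr h2 hc hcm (tendsto_two_pow_mul_sub hd)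
  obtain ⟨D', hD', hD'D, hQ⟩ := exists_le_tendsto_partialProd_mul (div_pos h0 hr)
    ((div_le_one hr).2 h1) hD (fun n => by linarith [hc n])
    (tendsto_atTop_mono (fun n => by linarith [hc n]) hDt) hP
  rw [div_mul_cancel₀ r' hr.ne'] at hQ
  exact ⟨D, D', hD, hD', hDm, hDt, hP, hD'D, hQ⟩
end

section
/- Let 0 < r' < r < 1, d ≥ 1, let (d(n)) be a sequence of positive naturals with ∏_{n=1}^∞ d(n)/(d(n)+1+2^(dn−d)) = r, and set ρ_n = ∏_{k=n+1}^∞ d(k)/(d(k)+1+2^(dk−d)). Then there exists a sequence (m(n)) of natural numbers with 1 ≤ m(n) ≤ d(n), m(n) divisible by nothing required, such that, setting γ_n = ∏_{k=1}^n m(k)/(d(k)+1+2^(dk−d)), one has γ_n ρ_n ≥ r' and γ_n ρ_n − r' < 1/(d(n)+1+2^(dn−d)) for all n. Consequently lim_{n→∞} γ_n = r'. -/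
/-!
Choose `m_n` greedily, as the least integer keeping `γ_n ρ_n ≥ r'`. Since
`γ_{n-1} ρ_{n-1} = D_n · (γ_{n-1} ρ_n / t_n) ≥ r'`, this `m_n` is at most `D_n`, and its minimality
gives `γ_n ρ_n < r' + γ_{n-1} ρ_n / t_n ≤ r' + 1 / t_n`. As the product converges to `r ≠ 0`,
`ρ_n = r / P_n → 1` and the factors `D_n / t_n` tend to `1`, so `1 / t_n ≤ 1 - D_n / t_n → 0`;
hence `γ_n → r'`.
-/

open Filter Topology Finset

section TailProducts

theorem prod_Icc_mul_eq_of_tendsto_tails {M : Type*} [CommMonoid M] [TopologicalSpace M]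
    [ContinuousMul M] [T2Space M] {f : ℕ → M} {a b : M} {m n : ℕ} (hmn : m ≤ n)
    (ha : Tendsto (fun N => ∏ k ∈ Icc (m + 1) N, f k) atTop (𝓝 a))
    (hb : Tendsto (fun N => ∏ k ∈ Icc (n + 1) N, f k) atTop (𝓝 b)) :
    (∏ k ∈ Icc (m + 1) n, f k) * b = a := by
  refine tendsto_nhds_unique (tendsto_const_nhds.mul hb) (ha.congr' ?_)
  filter_upwards [eventually_ge_atTop n] with N hN
  simp only [Icc_add_one_left_eq_Ioc, prod_Ioc_consecutive _ hmn hN]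

variable {f ρ : ℕ → ℝ} {r : ℝ}

theorem prod_Icc_mul_tail_eq (hprod : Tendsto (fun N => ∏ k ∈ Icc 1 N, f k) atTop (𝓝 r))
    (hρ : ∀ n, Tendsto (fun N => ∏ k ∈ Icc (n + 1) N, f k) atTop (𝓝 (ρ n))) (n : ℕ) :
    (∏ k ∈ Icc 1 n, f k) * ρ n = r :=
  prod_Icc_mul_eq_of_tendsto_tails (Nat.zero_le n) hprod (hρ n)

theorem tail_eq_mul_tail_succ
    (hρ : ∀ n, Tendsto (fun N => ∏ k ∈ Icc (n + 1) N, f k) atTop (𝓝 (ρ n))) (n : ℕ) :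
    ρ n = f (n + 1) * ρ (n + 1) := by
  simpa using (prod_Icc_mul_eq_of_tendsto_tails (Nat.le_succ n) (hρ n) (hρ (n + 1))).symm

theorem tail_ne_zero (hr : r ≠ 0)
    (hprod : Tendsto (fun N => ∏ k ∈ Icc 1 N, f k) atTop (𝓝 r))
    (hρ : ∀ n, Tendsto (fun N => ∏ k ∈ Icc (n + 1) N, f k) atTop (𝓝 (ρ n))) (n : ℕ) :
    ρ n ≠ 0 :=
  right_ne_zero_of_mul (prod_Icc_mul_tail_eq hprod hρ n ▸ hr)

theorem tail_pos (hf : ∀ k, 0 ≤ f k) (hr : r ≠ 0)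
    (hprod : Tendsto (fun N => ∏ k ∈ Icc 1 N, f k) atTop (𝓝 r))
    (hρ : ∀ n, Tendsto (fun N => ∏ k ∈ Icc (n + 1) N, f k) atTop (𝓝 (ρ n))) (n : ℕ) :
    0 < ρ n :=
  (ge_of_tendsto' (hρ n) fun _ => prod_nonneg fun k _ => hf k).lt_of_ne'
    (tail_ne_zero hr hprod hρ n)

theorem tail_le_one (hf₀ : ∀ k, 0 ≤ f k) (hf₁ : ∀ k, f k ≤ 1)
    (hρ : ∀ n, Tendsto (fun N => ∏ k ∈ Icc (n + 1) N, f k) atTop (𝓝 (ρ n))) (n : ℕ) :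
    ρ n ≤ 1 :=
  le_of_tendsto' (hρ n) fun _ => prod_le_one (fun k _ => hf₀ k) fun k _ => hf₁ k

theorem tendsto_tail_one (hr : r ≠ 0)
    (hprod : Tendsto (fun N => ∏ k ∈ Icc 1 N, f k) atTop (𝓝 r))
    (hρ : ∀ n, Tendsto (fun N => ∏ k ∈ Icc (n + 1) N, f k) atTop (𝓝 (ρ n))) :
    Tendsto ρ atTop (𝓝 1) := by
  have hquot := (tendsto_const_nhds (x := r)).div hprod hr
  rw [div_self hr] at hquot
  refine hquot.congr fun n => ?_
  have hP : (∏ k ∈ Icc 1 n, f k) ≠ 0 := left_ne_zero_of_mul (prod_Icc_mul_tail_eq hprod hρ n ▸ hr)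
  simp only [Pi.div_apply]
  rw [div_eq_iff hP, ← prod_Icc_mul_tail_eq hprod hρ n, mul_comm]

theorem tendsto_factor_one (hr : r ≠ 0)
    (hprod : Tendsto (fun N => ∏ k ∈ Icc 1 N, f k) atTop (𝓝 r))
    (hρ : ∀ n, Tendsto (fun N => ∏ k ∈ Icc (n + 1) N, f k) atTop (𝓝 (ρ n))) :
    Tendsto f atTop (𝓝 1) := by
  have hρ1 := tendsto_tail_one hr hprod hρ
  have hquot := hρ1.div ((tendsto_add_atTop_iff_nat 1).2 hρ1) one_ne_zero
  rw [div_one] at hquot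
  refine (tendsto_add_atTop_iff_nat 1).1 (hquot.congr fun n => ?_)
  simp only [Pi.div_apply]
  rw [div_eq_iff (tail_ne_zero hr hprod hρ (n + 1)), tail_eq_mul_tail_succ hρ n]

end TailProducts

theorem tendsto_one_div_of_tendsto_div_one {a t : ℕ → ℝ} (ht : ∀ n, 0 < t n)
    (hgap : ∀ n, 1 ≤ t n - a n) (h : Tendsto (fun n => a n / t n) atTop (𝓝 1)) :
    Tendsto (fun n => 1 / t n) atTop (𝓝 0) := by
  have hdefect := (tendsto_const_nhds (x := (1 : ℝ))).sub h
  rw [sub_self] at hdefect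
  refine tendsto_of_tendsto_of_tendsto_of_le_of_le tendsto_const_nhds hdefect
    (fun n => (one_div_pos.2 (ht n)).le) fun n => ?_
  rw [one_sub_div (ht n).ne']
  exact div_le_div_of_nonneg_right (hgap n) (ht n).le

theorem le_natCeil_div_mul {a c : ℝ} (hc : 0 < c) : a ≤ ⌈a / c⌉₊ * c :=
  (div_le_iff₀ hc).1 (Nat.le_ceil _)

theorem natCeil_div_mul_lt {a c : ℝ} (ha : 0 ≤ a) (hc : 0 < c) : ⌈a / c⌉₊ * c < a + c := by
  have h := Nat.ceil_lt_add_one (div_nonneg ha hc.le)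
  rwa [← lt_div_iff₀ hc, add_div, div_self hc.ne']

theorem natCeil_div_le {a c : ℝ} {k : ℕ} (hc : 0 < c) (h : a ≤ k * c) : ⌈a / c⌉₊ ≤ k :=
  Nat.ceil_le.2 ((div_le_iff₀ hc).2 h)

section Greedy

variable (r' : ℝ) (t ρ : ℕ → ℝ)

-- `⌈r' / c⌉₊` is the least `m` with `m * c ≥ r'`, here for the unit `c = γ_{n-1} * ρ_n / t_n`.
noncomputable def greedyGamma : ℕ → ℝ
  | 0 => 1
  | n + 1 => greedyGamma n * ⌈r' / (greedyGamma n * ρ (n + 1) / t (n + 1))⌉₊ / t (n + 1)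

noncomputable def greedyMult (n : ℕ) : ℕ :=
  ⌈r' / (greedyGamma r' t ρ (n - 1) * ρ n / t n)⌉₊

theorem greedyGamma_succ (n : ℕ) :
    greedyGamma r' t ρ (n + 1) = greedyGamma r' t ρ n * greedyMult r' t ρ (n + 1) / t (n + 1) :=
  rfl

theorem greedyGamma_succ_mul (n : ℕ) :
    greedyGamma r' t ρ (n + 1) * ρ (n + 1) =
      greedyMult r' t ρ (n + 1) * (greedyGamma r' t ρ n * ρ (n + 1) / t (n + 1)) := by
  rw [greedyGamma_succ]
  ring

theorem prod_greedyMult_div (n : ℕ) :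
    ∏ k ∈ Icc 1 n, (greedyMult r' t ρ k : ℝ) / t k = greedyGamma r' t ρ n := by
  induction n with
  | zero => rfl
  | succ n ih =>
    rw [prod_Icc_succ_top (Nat.le_add_left 1 n), ih, greedyGamma_succ]
    ring

variable {r' t ρ}

theorem greedyGamma_pos_and_le_mul (hr' : 0 < r') (ht : ∀ n, 0 < t n) (hρ : ∀ n, 0 < ρ n)
    (hstart : r' ≤ ρ 0) (n : ℕ) :
    0 < greedyGamma r' t ρ n ∧ r' ≤ greedyGamma r' t ρ n * ρ n := by
  induction n with
  | zero => simpa [greedyGamma] using hstart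
  | succ n ih =>
    have hc : 0 < greedyGamma r' t ρ n * ρ (n + 1) / t (n + 1) :=
      div_pos (mul_pos ih.1 (hρ _)) (ht _)
    have hm : 0 < greedyMult r' t ρ (n + 1) := Nat.ceil_pos.2 (div_pos hr' hc)
    refine ⟨?_, greedyGamma_succ_mul r' t ρ n ▸ le_natCeil_div_mul hc⟩
    rw [greedyGamma_succ]
    exact div_pos (mul_pos ih.1 (Nat.cast_pos.2 hm)) (ht _)

theorem one_le_greedyMult (hr' : 0 < r') (ht : ∀ n, 0 < t n) (hρ : ∀ n, 0 < ρ n)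
    (hstart : r' ≤ ρ 0) (n : ℕ) : 1 ≤ greedyMult r' t ρ (n + 1) := by
  have hγ := (greedyGamma_pos_and_le_mul hr' ht hρ hstart n).1
  exact Nat.ceil_pos.2 (div_pos hr' (div_pos (mul_pos hγ (hρ _)) (ht _)))

theorem greedyMult_le {D : ℕ → ℕ} (hr' : 0 < r') (ht : ∀ n, 0 < t n) (hρ : ∀ n, 0 < ρ n)
    (hstart : r' ≤ ρ 0) (hrec : ∀ n, ρ n = D (n + 1) / t (n + 1) * ρ (n + 1)) (n : ℕ) :
    greedyMult r' t ρ (n + 1) ≤ D (n + 1) := by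
  obtain ⟨hγ, hinv⟩ := greedyGamma_pos_and_le_mul hr' ht hρ hstart n
  refine natCeil_div_le (div_pos (mul_pos hγ (hρ _)) (ht _)) ?_
  calc r' ≤ greedyGamma r' t ρ n * ρ n := hinv
    _ = D (n + 1) * (greedyGamma r' t ρ n * ρ (n + 1) / t (n + 1)) := by rw [hrec]; ring

theorem greedyGamma_le_one {D : ℕ → ℕ} (hr' : 0 < r') (ht : ∀ n, 0 < t n) (hρ : ∀ n, 0 < ρ n)
    (hstart : r' ≤ ρ 0) (hrec : ∀ n, ρ n = D (n + 1) / t (n + 1) * ρ (n + 1))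
    (hDt : ∀ n, (D n : ℝ) ≤ t n) (n : ℕ) : greedyGamma r' t ρ n ≤ 1 := by
  induction n with
  | zero => rfl
  | succ n ih =>
    have hm : (greedyMult r' t ρ (n + 1) : ℝ) ≤ t (n + 1) :=
      (Nat.cast_le.2 (greedyMult_le hr' ht hρ hstart hrec n)).trans (hDt _)
    rw [greedyGamma_succ, div_le_one (ht _)]
    exact (mul_le_of_le_one_left (Nat.cast_nonneg _) ih).trans hm

theorem greedyGamma_mul_sub_lt {D : ℕ → ℕ} (hr' : 0 < r') (ht : ∀ n, 0 < t n)
    (hρ : ∀ n, 0 < ρ n) (hρ₁ : ∀ n, ρ n ≤ 1) (hstart : r' ≤ ρ 0)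
    (hrec : ∀ n, ρ n = D (n + 1) / t (n + 1) * ρ (n + 1)) (hDt : ∀ n, (D n : ℝ) ≤ t n)
    (n : ℕ) : greedyGamma r' t ρ (n + 1) * ρ (n + 1) - r' < 1 / t (n + 1) := by
  have hγ := (greedyGamma_pos_and_le_mul hr' ht hρ hstart n).1
  have hc : greedyGamma r' t ρ n * ρ (n + 1) / t (n + 1) ≤ 1 / t (n + 1) :=
    div_le_div_of_nonneg_right
      (mul_le_one₀ (greedyGamma_le_one hr' ht hρ hstart hrec hDt n) (hρ _).le (hρ₁ _)) (ht _).le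
  have hm : (greedyMult r' t ρ (n + 1) : ℝ) * (greedyGamma r' t ρ n * ρ (n + 1) / t (n + 1)) <
      r' + greedyGamma r' t ρ n * ρ (n + 1) / t (n + 1) :=
    natCeil_div_mul_lt hr'.le (div_pos (mul_pos hγ (hρ _)) (ht _))
  rw [greedyGamma_succ_mul]
  linarith

theorem tendsto_greedyGamma {D : ℕ → ℕ} (hr' : 0 < r') (ht : ∀ n, 0 < t n)
    (hρ : ∀ n, 0 < ρ n) (hρ₁ : ∀ n, ρ n ≤ 1) (hstart : r' ≤ ρ 0)
    (hrec : ∀ n, ρ n = D (n + 1) / t (n + 1) * ρ (n + 1)) (hDt : ∀ n, (D n : ℝ) ≤ t n)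
    (ht_inv : Tendsto (fun n => 1 / t n) atTop (𝓝 0)) (hρ_lim : Tendsto ρ atTop (𝓝 1)) :
    Tendsto (greedyGamma r' t ρ) atTop (𝓝 r') := by
  have hγρ : Tendsto (fun n => greedyGamma r' t ρ (n + 1) * ρ (n + 1)) atTop (𝓝 r') := by
    have hupper := (tendsto_const_nhds (x := r')).add ((tendsto_add_atTop_iff_nat 1).2 ht_inv)
    rw [add_zero] at hupper
    refine tendsto_of_tendsto_of_tendsto_of_le_of_le tendsto_const_nhds hupper
      (fun n => (greedyGamma_pos_and_le_mul hr' ht hρ hstart (n + 1)).2) fun n => ?_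
    have := greedyGamma_mul_sub_lt hr' ht hρ hρ₁ hstart hrec hDt n
    simp only
    linarith
  have hγ := hγρ.div ((tendsto_add_atTop_iff_nat 1).2 hρ_lim) one_ne_zero
  rw [div_one] at hγ
  refine (tendsto_add_atTop_iff_nat 1).1 (hγ.congr fun n => ?_)
  simp only [Pi.div_apply, mul_div_cancel_right₀ _ (hρ (n + 1)).ne']

end Greedy

theorem gamma_construction_general (d : ℕ) (r' r : ℝ) (h0 : 0 < r') (h1 : r' < r)
    (D : ℕ → ℕ)
    (hprod : Tendsto (fun N => ∏ n ∈ Finset.Icc 1 N, (D n : ℝ) / ((D n : ℝ) + 1 + 2 ^ (d * n - d)))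
      atTop (nhds r))
    (ρ : ℕ → ℝ)
    (hρ : ∀ n, Tendsto
      (fun N => ∏ k ∈ Finset.Icc (n + 1) N, (D k : ℝ) / ((D k : ℝ) + 1 + 2 ^ (d * k - d)))
      atTop (nhds (ρ n))) :
    ∃ m : ℕ → ℕ,
      (∀ n, 1 ≤ n → 1 ≤ m n ∧ m n ≤ D n) ∧
      (∀ n, 1 ≤ n →
        r' ≤ (∏ k ∈ Finset.Icc 1 n, (m k : ℝ) / ((D k : ℝ) + 1 + 2 ^ (d * k - d))) * ρ n ∧
        (∏ k ∈ Finset.Icc 1 n, (m k : ℝ) / ((D k : ℝ) + 1 + 2 ^ (d * k - d))) * ρ n - r'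
          < 1 / ((D n : ℝ) + 1 + 2 ^ (d * n - d))) ∧
      Tendsto (fun n => ∏ k ∈ Finset.Icc 1 n, (m k : ℝ) / ((D k : ℝ) + 1 + 2 ^ (d * k - d)))
        atTop (nhds r') := by
  let t : ℕ → ℝ := fun n => (D n : ℝ) + 1 + 2 ^ (d * n - d)
  have ht : ∀ n, 0 < t n := fun n => by positivity
  have hgap : ∀ n, 1 ≤ t n - D n := fun n => by
    simp only [t, add_assoc, add_sub_cancel_left]
    exact le_add_of_nonneg_right (by positivity)
  have hDt : ∀ n, (D n : ℝ) ≤ t n := fun n => by linarith [hgap n]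
  have hr : r ≠ 0 := (h0.trans h1).ne'
  have hf₀ : ∀ k, 0 ≤ (D k : ℝ) / t k := fun k => div_nonneg (Nat.cast_nonneg _) (ht k).le
  have hf₁ : ∀ k, (D k : ℝ) / t k ≤ 1 := fun k => (div_le_one (ht k)).2 (hDt k)
  have hρ₀ := tail_pos hf₀ hr hprod hρ
  have hρ₁ := tail_le_one hf₀ hf₁ hρ
  have hstart : r' ≤ ρ 0 := tendsto_nhds_unique hprod (hρ 0) ▸ h1.le
  have hrec := tail_eq_mul_tail_succ hρ
  have ht_inv : Tendsto (fun n => 1 / t n) atTop (𝓝 0) :=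
    tendsto_one_div_of_tendsto_div_one ht hgap (tendsto_factor_one hr hprod hρ)
  refine ⟨greedyMult r' t ρ, fun n hn => ?_, fun n hn => ?_, ?_⟩
  · obtain ⟨n, rfl⟩ := Nat.exists_eq_add_of_le' hn
    exact ⟨one_le_greedyMult h0 ht hρ₀ hstart n, greedyMult_le h0 ht hρ₀ hstart hrec n⟩
  · obtain ⟨n, rfl⟩ := Nat.exists_eq_add_of_le' hn
    rw [prod_greedyMult_div]
    exact ⟨(greedyGamma_pos_and_le_mul h0 ht hρ₀ hstart _).2,
      greedyGamma_mul_sub_lt h0 ht hρ₀ hρ₁ hstart hrec hDt n⟩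
  · refine (tendsto_greedyGamma h0 ht hρ₀ hρ₁ hstart hrec hDt ht_inv
      (tendsto_tail_one hr hprod hρ)).congr fun n => (prod_greedyMult_div r' t ρ n).symm

/-- for `0 < r' < r < 1`, `d ≥ 1`, a sequence `(d(n))` of positive naturals
with `∏_{n=1}^∞ d(n)/(d(n)+1+2^(dn−d)) = r` and tail products `ρ_n`, there is a sequence
`(m(n))` with `1 ≤ m(n) ≤ d(n)` such that, with
`γ_n = ∏_{k=1}^n m(k)/(d(k)+1+2^(dk−d))`, one has `γ_n ρ_n ≥ r'` and
`γ_n ρ_n − r' < 1/(d(n)+1+2^(dn−d))` for all `n ≥ 1`; consequently `γ_n → r'`. -/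
theorem gamma_construction (d : ℕ) (hd : 1 ≤ d) (r' r : ℝ) (h0 : 0 < r') (h1 : r' < r)
    (h2 : r < 1) (D : ℕ → ℕ) (hD : ∀ n, 0 < D n)
    (hprod : Tendsto (fun N => ∏ n ∈ Finset.Icc 1 N, (D n : ℝ) / ((D n : ℝ) + 1 + 2 ^ (d * n - d)))
      atTop (nhds r))
    (ρ : ℕ → ℝ)
    (hρ : ∀ n, Tendsto
      (fun N => ∏ k ∈ Finset.Icc (n + 1) N, (D k : ℝ) / ((D k : ℝ) + 1 + 2 ^ (d * k - d)))
      atTop (nhds (ρ n))) :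
    ∃ m : ℕ → ℕ,
      (∀ n, 1 ≤ n → 1 ≤ m n ∧ m n ≤ D n) ∧
      (∀ n, 1 ≤ n →
        r' ≤ (∏ k ∈ Finset.Icc 1 n, (m k : ℝ) / ((D k : ℝ) + 1 + 2 ^ (d * k - d))) * ρ n ∧
        (∏ k ∈ Finset.Icc 1 n, (m k : ℝ) / ((D k : ℝ) + 1 + 2 ^ (d * k - d))) * ρ n - r'
          < 1 / ((D n : ℝ) + 1 + 2 ^ (d * n - d))) ∧
      Tendsto (fun n => ∏ k ∈ Finset.Icc 1 n, (m k : ℝ) / ((D k : ℝ) + 1 + 2 ^ (d * k - d)))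
        atTop (nhds r') :=
  gamma_construction_general d r' r h0 h1 D hprod ρ hρ
end
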